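/- For a function f on ℝ² lying in L¹ ∩ L^p with p > 2, the Biot-Savart convolution K ∗ f, where K(x) = x^⊥/(2π|x|²), satisfies ‖K ∗ f‖_{L^∞(ℝ²)} ≤ C_p ‖f‖_{L¹}^{1 - p'/2} ‖f‖_{L^p}^{p'/2}, where p' = p/(p-1) and C_p depends only on p. -/

import Mathlib

open MeasureTheory Real

/-- The Biot-Savart kernel `K(x) = x^⊥ / (2π|x|²)` on ℝ². -/
noncomputable def biotSavartK (x : EuclideanSpace ℝ (Fin 2)) : EuclideanSpace ℝ (Fin 2) :=
  (2 * π * ‖x‖ ^ 2)⁻¹ • (WithLp.toLp 2 ![-x 1, x 0] : EuclideanSpace ℝ (Fin 2))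

/-!
Split the integral at a radius `R` around `x`. On the ball, Hölder's inequality bounds the
contribution by `‖f‖_p ‖K‖_{L^{p'}(B_R)}`; since `|K(z)| = (2π|z|)⁻¹` and `p' < 2`, the kernel
lies in `L^{p'}` near the origin and scaling gives `‖K‖_{L^{p'}(B_R)} = c R^{2/p' - 1}`.
Off the ball `|K| ≤ (2πR)⁻¹`, so that part is at most `‖f‖₁ / (2πR)`. The radius
`R = (‖f‖₁ / ‖f‖_p)^{p'/2}` makes both terms equal to `‖f‖₁^{1-p'/2} ‖f‖_p^{p'/2}`.
-/

open Metric Module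
open scoped ENNReal

section Homogeneity

variable {E : Type*} [NormedAddCommGroup E] [NormedSpace ℝ E] [FiniteDimensional ℝ E]
  [MeasurableSpace E] [BorelSpace E] (μ : Measure E) [μ.IsAddHaarMeasure]

theorem setIntegral_ball_norm_rpow (a : ℝ) {R : ℝ} (hR : 0 < R) :
    ∫ z in ball (0 : E) R, ‖z‖ ^ a ∂μ =
      R ^ (finrank ℝ E + a) * ∫ z in ball (0 : E) 1, ‖z‖ ^ a ∂μ := by
  have h := Measure.setIntegral_comp_smul_of_pos μ (fun z : E => ‖z‖ ^ a) (ball 0 1) hR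
  simp only [norm_smul, Real.norm_of_nonneg hR.le, mul_rpow hR.le (norm_nonneg _),
    integral_const_mul, smul_unitBall_of_pos hR, smul_eq_mul] at h
  rw [rpow_add hR, rpow_natCast, mul_assoc, h]
  field_simp

theorem eLpNorm_inv_norm_restrict_ball {q : ℝ} (hq : 0 < q) (hqd : q < finrank ℝ E) {R : ℝ}
    (hR : 0 < R) :
    eLpNorm (fun z : E => ‖z‖⁻¹) (.ofReal q) (μ.restrict (ball 0 R)) =
      .ofReal (R ^ (finrank ℝ E / q - 1) * (∫ z in ball (0 : E) 1, ‖z‖ ^ (-q) ∂μ) ^ q⁻¹) := by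
  have hd : 0 < finrank ℝ E := by exact_mod_cast hq.trans hqd
  have hint : IntegrableOn (fun z : E => ‖z‖ ^ (-q)) (ball 0 R) μ :=
    integrableOn_ball_of_norm_le_rpow hd (C := 1) (α := q) hqd
      (.of_forall fun z => by simp [abs_of_nonneg (rpow_nonneg (norm_nonneg z) _)])
      (measurable_norm.pow_const _).aestronglyMeasurable
  have hpow (z : E) : ‖‖z‖⁻¹‖ₑ ^ q = .ofReal (‖z‖ ^ (-q)) := by
    rw [← ofReal_norm, ENNReal.ofReal_rpow_of_nonneg (norm_nonneg _) hq.le, norm_inv,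
      norm_norm, inv_rpow (norm_nonneg _), rpow_neg (norm_nonneg _)]
  rw [eLpNorm_eq_lintegral_rpow_enorm_toReal (by simpa using hq) ENNReal.ofReal_ne_top,
    ENNReal.toReal_ofReal hq.le]
  simp_rw [hpow]
  rw [← ofReal_integral_eq_lintegral_ofReal hint (.of_forall fun z => by positivity),
    setIntegral_ball_norm_rpow μ _ hR,
    ENNReal.ofReal_rpow_of_nonneg (by positivity) (by positivity),
    mul_rpow (by positivity) (by positivity), ← rpow_mul hR.le, one_div]
  congr 3
  field_simp
  ring

end Homogeneity

section Convolution

variable {E F : Type*} [NormedAddCommGroup E] [MeasurableSpace E] [BorelSpace E]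
  [NormedAddCommGroup F] {μ : Measure E} {K : E → F} {f : E → ℝ}

theorem eLpNorm_comp_sub_left_restrict_ball [μ.IsAddLeftInvariant] [μ.IsNegInvariant]
    (hK : AEStronglyMeasurable K μ) (p : ℝ≥0∞) (x : E) (R : ℝ) :
    eLpNorm (fun y => K (x - y)) p (μ.restrict (ball x R)) =
      eLpNorm K p (μ.restrict (ball 0 R)) := by
  have hpre : (fun y => x - y) ⁻¹' ball 0 R = ball x R := by
    ext y; simp [dist_eq_norm, norm_sub_rev]
  have h := (Measure.measurePreserving_sub_left μ x).restrict_preimage_emb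
    (MeasurableEquiv.subLeft x).measurableEmbedding (ball 0 R)
  rw [hpre] at h
  exact eLpNorm_comp_measurePreserving hK.restrict h

theorem eLpNorm_smul_comp_sub_ball_le [NormedSpace ℝ F] [μ.IsAddLeftInvariant] [μ.IsNegInvariant]
    {p q : ℝ} (hpq : p.HolderConjugate q)
    (hK : AEStronglyMeasurable K μ) (hf : AEStronglyMeasurable f μ) (x : E) (R : ℝ) :
    eLpNorm (fun y => f y • K (x - y)) 1 (μ.restrict (ball x R)) ≤
      eLpNorm f (.ofReal p) μ * eLpNorm K (.ofReal q) (μ.restrict (ball 0 R)) := by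
  have := hpq.ennrealOfReal
  calc eLpNorm (fun y => f y • K (x - y)) 1 (μ.restrict (ball x R))
      ≤ eLpNorm f (.ofReal p) (μ.restrict (ball x R)) *
          eLpNorm (fun y => K (x - y)) (.ofReal q) (μ.restrict (ball x R)) :=
        eLpNorm_smul_le_mul_eLpNorm
          (hK.comp_measurePreserving (Measure.measurePreserving_sub_left μ x)).restrict hf.restrict
    _ ≤ eLpNorm f (.ofReal p) μ * eLpNorm K (.ofReal q) (μ.restrict (ball 0 R)) := by
        rw [eLpNorm_comp_sub_left_restrict_ball hK]
        gcongr
        exact Measure.restrict_le_self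

theorem eLpNorm_smul_comp_sub_compl_ball_le [NormedSpace ℝ F] {M R : ℝ}
    (hKM : ∀ z, R ≤ ‖z‖ → ‖K z‖ ≤ M) (hf : AEStronglyMeasurable f μ) (x : E) :
    eLpNorm (fun y => f y • K (x - y)) 1 (μ.restrict (ball x R)ᶜ) ≤
      eLpNorm f 1 μ * .ofReal M := by
  have hbound : ∀ᵐ y ∂μ.restrict (ball x R)ᶜ, ‖K (x - y)‖ ≤ M :=
    ae_restrict_of_forall_mem measurableSet_ball.compl fun y hy => hKM _ <| by
      simpa [dist_eq_norm, norm_sub_rev] using hy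
  calc eLpNorm (fun y => f y • K (x - y)) 1 (μ.restrict (ball x R)ᶜ)
      ≤ eLpNorm f 1 (μ.restrict (ball x R)ᶜ) *
          eLpNorm (fun y => K (x - y)) ∞ (μ.restrict (ball x R)ᶜ) :=
        eLpNorm_smul_le_eLpNorm_mul_eLpNorm_top _ _ hf.restrict
    _ ≤ eLpNorm f 1 μ * .ofReal M := by
        gcongr
        · exact Measure.restrict_le_self
        · rw [eLpNorm_exponent_top]
          exact eLpNormEssSup_le_of_ae_bound hbound

theorem enorm_integral_smul_comp_sub_le [NormedSpace ℝ F] [μ.IsAddLeftInvariant]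
    [μ.IsNegInvariant] {p q M R : ℝ} (hpq : p.HolderConjugate q)
    (hK : AEStronglyMeasurable K μ) (hKM : ∀ z, R ≤ ‖z‖ → ‖K z‖ ≤ M)
    (hf : AEStronglyMeasurable f μ) (x : E) :
    ‖∫ y, f y • K (x - y) ∂μ‖ₑ ≤
      eLpNorm f (.ofReal p) μ * eLpNorm K (.ofReal q) (μ.restrict (ball 0 R)) +
        eLpNorm f 1 μ * .ofReal M := by
  calc ‖∫ y, f y • K (x - y) ∂μ‖ₑ
      ≤ eLpNorm (fun y => f y • K (x - y)) 1 μ := by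
        rw [eLpNorm_one_eq_lintegral_enorm]
        exact enorm_integral_le_lintegral_enorm _
    _ = eLpNorm (fun y => f y • K (x - y)) 1 (μ.restrict (ball x R)) +
          eLpNorm (fun y => f y • K (x - y)) 1 (μ.restrict (ball x R)ᶜ) := by
        rw [← eLpNorm_one_add_measure, Measure.restrict_add_restrict_compl measurableSet_ball]
    _ ≤ _ := add_le_add (eLpNorm_smul_comp_sub_ball_le hpq hK hf x R)
        (eLpNorm_smul_comp_sub_compl_ball_le hKM hf x)

end Convolution

theorem mul_rpow_div_rpow_inv_sub_one {A B θ : ℝ} (hA : 0 < A) (hB : 0 < B) (hθ : θ ≠ 0) :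
    B * ((A / B) ^ θ) ^ (θ⁻¹ - 1) = A ^ (1 - θ) * B ^ θ := by
  rw [← rpow_mul (by positivity), mul_sub, mul_inv_cancel₀ hθ, mul_one, div_rpow hA.le hB.le,
    rpow_sub hB, rpow_one]
  field_simp

theorem mul_inv_rpow_div {A B θ : ℝ} (hA : 0 < A) (hB : 0 < B) :
    A * ((A / B) ^ θ)⁻¹ = A ^ (1 - θ) * B ^ θ := by
  rw [div_rpow hA.le hB.le, rpow_sub hA, rpow_one]
  field_simp

theorem MeasureTheory.MemLp.toReal_eLpNorm_pos {α E : Type*} [MeasurableSpace α]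
    [NormedAddCommGroup E] {μ : Measure α} {p : ℝ≥0∞} {f : α → E} (hf : MemLp f p μ) (hp : p ≠ 0)
    (hf0 : ¬f =ᵐ[μ] 0) : 0 < (eLpNorm f p μ).toReal :=
  ENNReal.toReal_pos (mt (eLpNorm_eq_zero_iff hf.1 hp).1 hf0) hf.eLpNorm_ne_top

local notation "E2" => EuclideanSpace ℝ (Fin 2)

theorem norm_biotSavartK (w : E2) : ‖biotSavartK w‖ = (2 * π)⁻¹ * ‖w‖⁻¹ := by
  have hrot : ‖(WithLp.toLp 2 ![-w 1, w 0] : E2)‖ = ‖w‖ := by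
    simp [EuclideanSpace.norm_eq, Fin.sum_univ_two, add_comm]
  rw [biotSavartK, norm_smul, hrot, norm_inv, Real.norm_of_nonneg (by positivity)]
  rcases eq_or_ne ‖w‖ 0 with hw | hw
  · simp [hw]
  · field_simp

theorem measurable_biotSavartK : Measurable biotSavartK := by
  unfold biotSavartK
  fun_prop

theorem exists_eLpNorm_biotSavartK_restrict_ball_eq {q : ℝ} (hq : 0 < q) (hq2 : q < 2) :
    ∃ c, 0 ≤ c ∧ ∀ R, 0 < R →
      eLpNorm biotSavartK (.ofReal q) (volume.restrict (ball 0 R)) =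
        .ofReal (c * R ^ (2 / q - 1)) := by
  have hI : 0 ≤ ∫ z in ball (0 : E2) 1, ‖z‖ ^ (-q) :=
    setIntegral_nonneg measurableSet_ball fun z _ => by positivity
  refine ⟨(2 * π)⁻¹ * (∫ z in ball (0 : E2) 1, ‖z‖ ^ (-q)) ^ q⁻¹, by positivity, fun R hR => ?_⟩
  have hq2' : q < finrank ℝ E2 := by simpa using hq2
  rw [eLpNorm_congr_norm_ae (g := (2 * π)⁻¹ • fun z : E2 => ‖z‖⁻¹) (.of_forall fun z => by
      simp [norm_biotSavartK, abs_of_pos pi_pos]),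
    eLpNorm_const_smul, eLpNorm_inv_norm_restrict_ball _ hq hq2' hR, finrank_euclideanSpace_fin,
    ← ofReal_norm, ← ENNReal.ofReal_mul (norm_nonneg _), Real.norm_of_nonneg (by positivity)]
  congr 1
  push_cast
  ring

theorem norm_biotSavartK_le {R : ℝ} (hR : 0 < R) {z : E2} (hz : R ≤ ‖z‖) :
    ‖biotSavartK z‖ ≤ (2 * π)⁻¹ * R⁻¹ := by
  rw [norm_biotSavartK]
  gcongr

theorem exists_norm_integral_biotSavartK_le {p q : ℝ} (hpq : p.HolderConjugate q) (hq2 : q < 2) :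
    ∃ c, 0 ≤ c ∧ ∀ f : E2 → ℝ, MemLp f 1 volume → MemLp f (.ofReal p) volume →
      ∀ R, 0 < R → ∀ x, ‖∫ y, f y • biotSavartK (x - y)‖ ≤
        c * (eLpNorm f (.ofReal p) volume).toReal * R ^ (2 / q - 1) +
          (2 * π)⁻¹ * (eLpNorm f 1 volume).toReal * R⁻¹ := by
  obtain ⟨c, hc, hK⟩ := exists_eLpNorm_biotSavartK_restrict_ball_eq hpq.symm.pos hq2
  refine ⟨c, hc, fun f hf1 hfp R hR x => ?_⟩
  have h := enorm_integral_smul_comp_sub_le hpq measurable_biotSavartK.aestronglyMeasurable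
    (fun z => norm_biotSavartK_le hR) hfp.aestronglyMeasurable x
  rw [hK R hR, ← ofReal_norm, ← ENNReal.ofReal_toReal hf1.eLpNorm_ne_top,
    ← ENNReal.ofReal_toReal hfp.eLpNorm_ne_top, ← ENNReal.ofReal_mul ENNReal.toReal_nonneg,
    ← ENNReal.ofReal_mul ENNReal.toReal_nonneg,
    ← ENNReal.ofReal_add (by positivity) (by positivity),
    ENNReal.ofReal_le_ofReal_iff (by positivity)] at h
  linarith

/-- for `f ∈ L¹ ∩ L^p`, `p > 2`, one has
`‖K ∗ f‖_∞ ≤ C_p ‖f‖₁^{1-p'/2} ‖f‖_p^{p'/2}`, `p' = p/(p-1)`. -/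
theorem stmt_5 (p : ℝ) (hp : 2 < p) :
    ∃ C : ℝ, 0 < C ∧ ∀ f : EuclideanSpace ℝ (Fin 2) → ℝ,
      MemLp f 1 volume → MemLp f (ENNReal.ofReal p) volume →
      ∀ x : EuclideanSpace ℝ (Fin 2),
        ‖∫ y, f y • biotSavartK (x - y)‖ ≤
          C * (eLpNorm f 1 volume).toReal ^ (1 - (p / (p - 1)) / 2) *
            (eLpNorm f (ENNReal.ofReal p) volume).toReal ^ ((p / (p - 1)) / 2) := by
  set q := p / (p - 1) with hq
  have hpq : p.HolderConjugate q := (Real.holderConjugate_iff_eq_conjExponent (by linarith)).2 rfl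
  have hq2 : q < 2 := by rw [hq, div_lt_iff₀ (by linarith)]; linarith
  obtain ⟨c, hc, hbound⟩ := exists_norm_integral_biotSavartK_le hpq hq2
  refine ⟨c + (2 * π)⁻¹, by positivity, fun f hf1 hfp x => ?_⟩
  by_cases hf0 : f =ᵐ[volume] 0
  · rw [integral_eq_zero_of_ae (by filter_upwards [hf0] with y hy; simp [hy]), norm_zero]
    positivity
  have hA := hf1.toReal_eLpNorm_pos one_ne_zero hf0
  have hB := hfp.toReal_eLpNorm_pos (ENNReal.ofReal_pos.2 (by linarith)).ne' hf0
  have h := hbound f hf1 hfp (((eLpNorm f 1 volume).toReal /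
    (eLpNorm f (.ofReal p) volume).toReal) ^ (q / 2)) (by positivity) x
  rw [← inv_div q 2, mul_assoc c,
    mul_rpow_div_rpow_inv_sub_one hA hB (half_pos hpq.symm.pos).ne', mul_assoc (2 * π)⁻¹,
    mul_inv_rpow_div hA hB] at h
  linarith
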